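/- arXiv:2103.16717 — 4 statements merged into one kernel-verified Lean document; each statement's English description precedes it below -/
import Mathlib

section
/- For every countable type 𝒳 and every natural number M, there exists a function ψ : 𝒳 → ℝ such that the map sending each multiset S over 𝒳 of cardinality M to the sum ∑_{x ∈ S} ψ(x) is injective on the set of multisets of 𝒳 of cardinality M. -/
open Cardinal in
/-- There is a `ℚ`-linearly independent family of reals indexed by any countable type. -/
lemma exists_linearIndependent_real (𝒳 : Type*) [Countable 𝒳] :
    ∃ ψ : 𝒳 → ℝ, LinearIndependent ℚ ψ := by
  obtain ⟨I, b⟩ := Module.Free.exists_basis (R := ℚ) (M := ℝ)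
  haveI : Infinite I := by
    rw [Cardinal.infinite_iff, b.mk_eq_rank'', Real.rank_rat_real]
    exact aleph0_le_continuum
  obtain ⟨f1, hf1⟩ := exists_injective_nat 𝒳
  let f2 := Infinite.natEmbedding I
  refine ⟨b ∘ f2 ∘ f1, b.linearIndependent.comp _ ?_⟩
  exact f2.injective.comp hf1

/-- **Injectivity lemma for sums over multisets (Deep Sets representation).**
For every countable type `𝒳` and every natural number `M`, there exists a function
`ψ : 𝒳 → ℝ` such that the map sending each multiset `S` over `𝒳` of cardinality `M`
to `∑_{x ∈ S} ψ(x)` is injective on the set of multisets of cardinality `M`. -/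
theorem multiset_sum_injective_representation (𝒳 : Type*) [Countable 𝒳] (M : ℕ) :
    ∃ ψ : 𝒳 → ℝ,
      Set.InjOn (fun S : Multiset 𝒳 => (S.map ψ).sum)
        {S : Multiset 𝒳 | Multiset.card S = M} := by
  classical
  obtain ⟨ψ, hψ⟩ := exists_linearIndependent_real 𝒳
  refine ⟨ψ, fun S _ T _ hsum => ?_⟩
  simp only at hsum
  -- rewrite both sums over the common finset
  set u : Finset 𝒳 := S.toFinset ∪ T.toFinset with hu
  have hS : (S.map ψ).sum = ∑ x ∈ u, S.count x • ψ x := by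
    rw [Finset.sum_multiset_map_count]
    refine Finset.sum_subset (Finset.subset_union_left) ?_
    intro x _ hx
    simp [Multiset.count_eq_zero_of_notMem (by simpa using hx)]
  have hT : (T.map ψ).sum = ∑ x ∈ u, T.count x • ψ x := by
    rw [Finset.sum_multiset_map_count]
    refine Finset.sum_subset (Finset.subset_union_right) ?_
    intro x _ hx
    simp [Multiset.count_eq_zero_of_notMem (by simpa using hx)]
  have hzero : ∑ x ∈ u, ((S.count x : ℚ) - (T.count x : ℚ)) • ψ x = 0 := by
    have : ∑ x ∈ u, ((S.count x : ℚ) - (T.count x : ℚ)) • ψ x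
        = ∑ x ∈ u, S.count x • ψ x - ∑ x ∈ u, T.count x • ψ x := by
      rw [← Finset.sum_sub_distrib]
      refine Finset.sum_congr rfl fun x _ => ?_
      rw [sub_smul, Nat.cast_smul_eq_nsmul, Nat.cast_smul_eq_nsmul]
    rw [this, ← hS, ← hT, hsum, sub_self]
  have hcount := linearIndependent_iff'.1 hψ u _ hzero
  ext x
  by_cases hx : x ∈ u
  · have := hcount x hx
    have : (S.count x : ℚ) = (T.count x : ℚ) := by linarith [sub_eq_zero.mp this]
    exact_mod_cast this
  · rw [Multiset.count_eq_zero_of_notMem, Multiset.count_eq_zero_of_notMem]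
    · intro h; exact hx (Finset.mem_union_right _ (Multiset.mem_toFinset.2 h))
    · intro h; exact hx (Finset.mem_union_left _ (Multiset.mem_toFinset.2 h))
end

section
/- Let 𝒳 be a countable type and M a natural number. A function f : (Fin M → 𝒳) → ℝ is invariant under all permutations of its M arguments (i.e., f(x ∘ σ) = f(x) for every permutation σ of Fin M) if and only if there exist functions ψ : 𝒳 → ℝ and Φ : ℝ → ℝ such that f(x) = Φ(∑_{i ∈ Fin M} ψ(x i)) for all x. -/
/-!
Send `a : 𝒳` to `log pₙ`, where `pₙ` is the `n`-th prime and `n` is the index of `a` in an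
injective enumeration of `𝒳`. Then `∑ i, ψ (x i)` is the logarithm of `∏ i, p_{n(x i)}`, and by
unique factorisation this product determines the tuple `x` up to a permutation of its entries.
So a permutation invariant `f` is constant on the fibres of `x ↦ ∑ i, ψ (x i)` and factors
through it.
-/

open Function

theorem exists_perm_comp_eq_of_perm_ofFn {α : Type*} [LinearOrder α] {M : ℕ} {u v : Fin M → α}
    (h : (List.ofFn u).Perm (List.ofFn v)) : ∃ σ : Equiv.Perm (Fin M), u ∘ σ = v := by
  have hsorted : u ∘ Tuple.sort u = v ∘ Tuple.sort v := by
    have hperm : (List.ofFn (u ∘ Tuple.sort u)).Perm (List.ofFn (v ∘ Tuple.sort v)) :=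
      ((Equiv.Perm.ofFn_comp_perm _ u).trans h).trans (Equiv.Perm.ofFn_comp_perm _ v).symm
    exact List.ofFn_injective <| hperm.eq_of_sortedLE
      (Tuple.monotone_sort u).sortedLE_ofFn (Tuple.monotone_sort v).sortedLE_ofFn
  refine ⟨(Tuple.sort v).symm.trans (Tuple.sort u), funext fun i => ?_⟩
  simpa using congrFun hsorted ((Tuple.sort v).symm i)

theorem exists_perm_comp_eq_of_prod_eq {M : ℕ} {u v : Fin M → ℕ}
    (hu : ∀ i, (u i).Prime) (hv : ∀ i, (v i).Prime) (h : ∏ i, u i = ∏ i, v i) :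
    ∃ σ : Equiv.Perm (Fin M), u ∘ σ = v := by
  have factors_u := Nat.primeFactorsList_unique (List.prod_ofFn (f := u)) (by simpa using hu)
  have factors_v := Nat.primeFactorsList_unique (List.prod_ofFn (f := v)) (by simpa using hv)
  rw [h] at factors_u
  exact exists_perm_comp_eq_of_perm_ofFn (factors_u.trans factors_v.symm)

noncomputable def primeLogCode (n : ℕ) : ℝ :=
  Real.log (Nat.nth Nat.Prime n)

theorem sum_primeLogCode {M : ℕ} (u : Fin M → ℕ) :
    ∑ i, primeLogCode (u i) = Real.log (∏ i, Nat.nth Nat.Prime (u i) : ℕ) := by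
  rw [Nat.cast_prod, Real.log_prod]
  · rfl
  · exact fun i _ => Nat.cast_ne_zero.mpr (Nat.prime_nth_prime (u i)).ne_zero

theorem exists_perm_comp_eq_of_sum_primeLogCode_eq {M : ℕ} {u v : Fin M → ℕ}
    (h : ∑ i, primeLogCode (u i) = ∑ i, primeLogCode (v i)) :
    ∃ σ : Equiv.Perm (Fin M), u ∘ σ = v := by
  have prod_pos : ∀ w : Fin M → ℕ, (0 : ℝ) < (∏ i, Nat.nth Nat.Prime (w i) : ℕ) := fun w =>
    Nat.cast_pos.mpr (Finset.prod_pos fun i _ => (Nat.prime_nth_prime (w i)).pos)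
  rw [sum_primeLogCode, sum_primeLogCode] at h
  have hprod := Nat.cast_injective (Real.log_injOn_pos (prod_pos u) (prod_pos v) h)
  obtain ⟨σ, hσ⟩ := exists_perm_comp_eq_of_prod_eq (fun i => Nat.prime_nth_prime (u i))
    (fun i => Nat.prime_nth_prime (v i)) hprod
  exact ⟨σ, (Nat.nth_injective Nat.infinite_setOfPred_prime).comp_left hσ⟩

/-- **Representation result for permutation invariance (Deep Sets, Theorem 1).**
Let `𝒳` be a countable type and `M` a natural number. A function
`f : (Fin M → 𝒳) → ℝ` is invariant under all permutations of its `M` arguments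
if and only if there exist `ψ : 𝒳 → ℝ` and `Φ : ℝ → ℝ` such that
`f x = Φ (∑ i, ψ (x i))` for all `x`. -/
theorem permutation_invariant_iff_sum_decomposition
    (𝒳 : Type*) [Countable 𝒳] (M : ℕ) (f : (Fin M → 𝒳) → ℝ) :
    (∀ (x : Fin M → 𝒳) (σ : Equiv.Perm (Fin M)), f (x ∘ σ) = f x) ↔
      ∃ (ψ : 𝒳 → ℝ) (Φ : ℝ → ℝ), ∀ x : Fin M → 𝒳, f x = Φ (∑ i, ψ (x i)) := by
  refine ⟨fun hinv => ?_, ?_⟩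
  · obtain ⟨enc, henc⟩ := Countable.exists_injective_nat 𝒳
    have hfactor : f.FactorsThrough fun x => ∑ i, primeLogCode (enc (x i)) := fun x y hxy => by
      obtain ⟨σ, hσ⟩ := exists_perm_comp_eq_of_sum_primeLogCode_eq hxy
      have hxσ : x ∘ σ = y := henc.comp_left hσ
      rw [← hinv x σ, hxσ]
    exact ⟨primeLogCode ∘ enc, extend _ f 0, fun x => (hfactor.extend_apply 0 x).symm⟩
  · rintro ⟨ψ, Φ, h⟩ x σ
    rw [h, h]
    exact congrArg Φ (Equiv.sum_comp σ fun i => ψ (x i))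
end

section
/- Let K be a nonempty finite index set, let (n_k)_{k∈K} be positive integers with ∑_{k∈K} n_k = n, and let (p_k)_{k∈K} be a probability vector with p_k > 0 implying n_k > 0. Define the source rate R_S = 2 log₂(n), the joint (helper-based) rate R_J = 2 ∑_{k∈K} p_k log₂(n_k) + H(K_B), and the helper rate H(K_B) = −∑_{k∈K} p_k log₂ p_k. Then the rate saving satisfies R_S − R_J ≥ H(K_B). -/
open scoped BigOperators

/-- **Rate saving of the helper-based (common information) scheme.**
Let `K` be a nonempty finite index set, `(n_k)` positive integers with
`∑ n_k = n`, and `(p_k)` a probability vector with `p_k > 0 → n_k > 0`.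
With `R_S = 2 log₂ n`, `H(K_B) = −∑ p_k log₂ p_k`, and
`R_J = 2 ∑ p_k log₂ n_k + H(K_B)`, the rate saving satisfies
`R_S − R_J ≥ H(K_B)`. -/
theorem rate_saving_helper_scheme
    (K : Type*) [Fintype K] [Nonempty K] (nk : K → ℕ) (n : ℕ)
    (hpos : ∀ k, 0 < nk k) (hsum : ∑ k, nk k = n)
    (p : K → ℝ) (hp0 : ∀ k, 0 ≤ p k) (hp1 : ∑ k, p k = 1)
    (himp : ∀ k, 0 < p k → 0 < nk k) :
    2 * Real.logb 2 (n : ℝ)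
        - (2 * ∑ k, p k * Real.logb 2 ((nk k : ℝ))
            + (-∑ k, p k * Real.logb 2 (p k)))
      ≥ -∑ k, p k * Real.logb 2 (p k) := by
  have hnnat : 0 < n := by
    rw [← hsum]; exact Finset.sum_pos (fun k _ => hpos k) Finset.univ_nonempty
  have hn : (0:ℝ) < (n:ℝ) := by exact_mod_cast hnnat
  have key : ∀ k, p k * (Real.log (nk k) - Real.log (p k) - Real.log n)
      ≤ (nk k : ℝ) / n - p k := by
    intro k
    rcases eq_or_lt_of_le (hp0 k) with h | h
    · rw [← h]; simp; positivity
    · have hnk : (0:ℝ) < (nk k : ℝ) := by exact_mod_cast himp k h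
      have hx : (0:ℝ) < (nk k : ℝ) / (p k * n) := by positivity
      have hlog := Real.log_le_sub_one_of_pos hx
      rw [Real.log_div (ne_of_gt hnk) (by positivity),
        Real.log_mul (ne_of_gt h) (ne_of_gt hn)] at hlog
      have h2 : p k * (Real.log (nk k) - Real.log (p k) - Real.log n)
          ≤ p k * ((nk k : ℝ) / (p k * n) - 1) := by
        apply mul_le_mul_of_nonneg_left _ (le_of_lt h)
        linarith
      have h3 : p k * ((nk k : ℝ) / (p k * n) - 1) = (nk k : ℝ) / n - p k := by
        field_simp
      linarith
  have hsumkey : ∑ k, p k * (Real.log (nk k) - Real.log (p k) - Real.log n) ≤ 0 := by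
    calc ∑ k, p k * (Real.log (nk k) - Real.log (p k) - Real.log n)
        ≤ ∑ k, ((nk k : ℝ) / n - p k) := Finset.sum_le_sum (fun k _ => key k)
      _ = 0 := by
          rw [Finset.sum_sub_distrib, hp1, ← Finset.sum_div]
          have hcast : ∑ k, ((nk k : ℝ)) = (n : ℝ) := by exact_mod_cast hsum
          rw [hcast, div_self (ne_of_gt hn)]; ring
  have hA : 0 ≤ Real.log n - ∑ k, p k * Real.log (nk k) + ∑ k, p k * Real.log (p k) := by
    have expand : ∑ k, p k * (Real.log (nk k) - Real.log (p k) - Real.log n)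
        = ∑ k, p k * Real.log (nk k) - ∑ k, p k * Real.log (p k) - Real.log n := by
      simp only [mul_sub]
      rw [Finset.sum_sub_distrib, Finset.sum_sub_distrib, ← Finset.sum_mul, hp1, one_mul]
    linarith [hsumkey, expand.symm.le, expand.le]
  have hL2 : (0:ℝ) < Real.log 2 := Real.log_pos one_lt_two
  have e1 : ∀ f : K → ℝ, ∑ k, p k * (f k / Real.log 2) = (∑ k, p k * f k) / Real.log 2 := by
    intro f
    rw [Finset.sum_div]
    exact Finset.sum_congr rfl (fun k _ => (mul_div_assoc _ _ _).symm)
  have hB : 0 ≤ Real.logb 2 (n : ℝ) - ∑ k, p k * Real.logb 2 ((nk k : ℝ))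
      + ∑ k, p k * Real.logb 2 (p k) := by
    simp only [Real.logb]
    rw [e1 (fun k => Real.log (nk k)), e1 (fun k => Real.log (p k)),
      ← sub_div, ← add_div]
    exact div_nonneg hA (le_of_lt hL2)
  linarith [hB]
end

section
/- Let (Ω, P) be a probability space, let X₁ : Ω → 𝒳₁ and X₂ : Ω → 𝒳₂ be random variables with finite ranges and joint support S = {(x₁, x₂) : P(X₁ = x₁, X₂ = x₂) > 0}, and let C : Ω → 𝒦 assign to each outcome the connected component of the bipartite graph on 𝒳₁ ⊕ 𝒳₂ with edge set S that contains X₁ (equivalently, X₂). Then: (i) C is almost surely a function of X₁ alone and almost surely a function of X₂ alone (so H(C | X₁) = H(C | X₂) = 0); and (ii) for every finite-valued random variable Y satisfying Y = g₁(X₁) almost surely and Y = g₂(X₂) almost surely for some functions g₁, g₂, one has H(Y) ≤ H(C). Hence the connected component index achieves the maximum H(Y) over all Y with H(Y | X₁) = H(Y | X₂) = 0. -/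
open scoped BigOperators
open MeasureTheory

/-- Shannon entropy (base 2) of a finite-valued random variable `X` on `(Ω, μ)`. -/
noncomputable def shannonEntropy {Ω : Type*} [MeasurableSpace Ω] (μ : Measure Ω)
    {S : Type*} [Fintype S] (X : Ω → S) : ℝ :=
  -∑ s : S, (μ (X ⁻¹' {s})).toReal * Real.logb 2 (μ (X ⁻¹' {s})).toReal

/-- Conditional Shannon entropy (base 2) `H(X | Y)` of finite-valued random
variables on `(Ω, μ)`. -/
noncomputable def condShannonEntropy {Ω : Type*} [MeasurableSpace Ω] (μ : Measure Ω)
    {S T : Type*} [Fintype S] [Fintype T] (X : Ω → S) (Y : Ω → T) : ℝ :=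
  -∑ t : T, ∑ s : S,
    (μ (X ⁻¹' {s} ∩ Y ⁻¹' {t})).toReal *
      Real.logb 2 ((μ (X ⁻¹' {s} ∩ Y ⁻¹' {t})).toReal / (μ (Y ⁻¹' {t})).toReal)

/-- The bipartite graph on `𝒳₁ ⊕ 𝒳₂` whose edges are exactly the pairs
`(x₁, x₂)` in the support `S` of a joint distribution. -/
def bipartiteGraph {𝒳₁ 𝒳₂ : Type*} (S : Set (𝒳₁ × 𝒳₂)) : SimpleGraph (𝒳₁ ⊕ 𝒳₂) :=
  SimpleGraph.fromRel (fun a b => ∃ p ∈ S, a = Sum.inl p.1 ∧ b = Sum.inr p.2)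

/-- Shannon entropy only depends on the a.e. equivalence class. -/
lemma shannonEntropy_congr_ae {Ω : Type*} [MeasurableSpace Ω] {μ : Measure Ω}
    {S : Type*} [Fintype S] {X Y : Ω → S} (h : ∀ᵐ ω ∂μ, X ω = Y ω) :
    shannonEntropy μ X = shannonEntropy μ Y := by
  unfold shannonEntropy
  congr 1
  refine Finset.sum_congr rfl fun s _ => ?_
  have : μ (X ⁻¹' {s}) = μ (Y ⁻¹' {s}) := by
    refine measure_congr (Filter.eventuallyEq_set.2 ?_)
    filter_upwards [h] with ω hω
    simp [Set.mem_preimage, hω]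
  rw [this]

/-- Preimages of arbitrary sets under a function with measurable singleton
preimages into a finite type are measurable. -/
lemma measurableSet_preimage_of_fintype {Ω : Type*} [MeasurableSpace Ω]
    {T : Type*} [Fintype T] {X : Ω → T} (hX : ∀ t, MeasurableSet (X ⁻¹' {t}))
    (A : Set T) : MeasurableSet (X ⁻¹' A) := by
  have : X ⁻¹' A = ⋃ t ∈ A, X ⁻¹' {t} := by ext ω; simp
  rw [this]
  exact MeasurableSet.biUnion (Set.to_countable A) fun t _ => hX t

/-- Data processing: the entropy of a deterministic function of `Z` is at most
the entropy of `Z`. -/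
lemma shannonEntropy_comp_le {Ω : Type*} [MeasurableSpace Ω] (μ : Measure Ω)
    [IsProbabilityMeasure μ] {S T : Type*} [Fintype S] [Fintype T]
    (Z : Ω → S) (hZ : ∀ s, MeasurableSet (Z ⁻¹' {s})) (f : S → T) :
    shannonEntropy μ (f ∘ Z) ≤ shannonEntropy μ Z := by
  classical
  set p : S → ℝ := fun s => (μ (Z ⁻¹' {s})).toReal with hp
  set q : T → ℝ := fun t => (μ ((f ∘ Z) ⁻¹' {t})).toReal with hq
  have hp0 : ∀ s, 0 ≤ p s := fun s => ENNReal.toReal_nonneg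
  have hqsum : ∀ t, q t = ∑ s ∈ Finset.univ.filter (fun s => f s = t), p s := by
    intro t
    have hset : (f ∘ Z) ⁻¹' {t} =
        ⋃ s ∈ Finset.univ.filter (fun s => f s = t), Z ⁻¹' {s} := by
      ext ω
      simp [Set.mem_preimage, Function.comp]
    have hdisj : (↑(Finset.univ.filter (fun s => f s = t)) : Set S).PairwiseDisjoint
        (fun s => Z ⁻¹' {s}) := by
      intro a _ b _ hab
      simp only [Function.onFun, Set.disjoint_left]
      intro ω ha hb
      exact hab (by simpa using ha.symm.trans (hb : Z ω = b))
    rw [hq]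
    simp only
    rw [hset, measure_biUnion_finset hdisj fun s _ => hZ s,
      ENNReal.toReal_sum fun s _ => measure_ne_top μ _]
  have hple : ∀ s, p s ≤ q (f s) := by
    intro s
    rw [hqsum (f s)]
    exact Finset.single_le_sum (fun i _ => hp0 i) (by simp)
  have key : ∀ s, -(p s * Real.logb 2 (q (f s))) ≤ -(p s * Real.logb 2 (p s)) := by
    intro s
    rcases eq_or_lt_of_le (hp0 s) with h0 | h0
    · simp [← h0]
    · have := Real.logb_le_logb_of_le (by norm_num : (1:ℝ) < 2) h0 (hple s)
      nlinarith [this, h0]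
  calc shannonEntropy μ (f ∘ Z)
      = ∑ t : T, -(q t * Real.logb 2 (q t)) := by
        unfold shannonEntropy; rw [← Finset.sum_neg_distrib]
    _ = ∑ t : T, ∑ s ∈ Finset.univ.filter (fun s => f s = t),
          -(p s * Real.logb 2 (q t)) := by
        refine Finset.sum_congr rfl fun t _ => ?_
        rw [hqsum t, Finset.sum_mul, ← Finset.sum_neg_distrib]
    _ = ∑ t : T, ∑ s ∈ Finset.univ.filter (fun s => f s = t),
          -(p s * Real.logb 2 (q (f s))) := by
        refine Finset.sum_congr rfl fun t _ => Finset.sum_congr rfl fun s hs => ?_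
        simp only [Finset.mem_filter] at hs
        rw [hs.2]
    _ = ∑ s : S, -(p s * Real.logb 2 (q (f s))) :=
        Finset.sum_fiberwise_of_maps_to (fun s _ => Finset.mem_univ (f s)) _
    _ ≤ ∑ s : S, -(p s * Real.logb 2 (p s)) := Finset.sum_le_sum fun s _ => key s
    _ = shannonEntropy μ Z := by unfold shannonEntropy; rw [← Finset.sum_neg_distrib]

/-- If `C` is a.s. a function of `X`, then `H(C | X) = 0`. -/
lemma condShannonEntropy_eq_zero {Ω : Type*} [MeasurableSpace Ω] (μ : Measure Ω)
    {S T : Type*} [Fintype S] [Fintype T] (C : Ω → S) (X : Ω → T) (c : T → S)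
    (h : ∀ᵐ ω ∂μ, C ω = c (X ω)) : condShannonEntropy μ C X = 0 := by
  unfold condShannonEntropy
  rw [neg_eq_zero]
  refine Finset.sum_eq_zero fun t _ => Finset.sum_eq_zero fun s _ => ?_
  have hμ : μ (C ⁻¹' {s} ∩ X ⁻¹' {t}) = μ ((fun ω => c (X ω)) ⁻¹' {s} ∩ X ⁻¹' {t}) := by
    refine measure_congr (Filter.eventuallyEq_set.2 ?_)
    filter_upwards [h] with ω hω
    simp [Set.mem_preimage, hω]
  rw [hμ]
  by_cases hct : c t = s
  · have hset : (fun ω => c (X ω)) ⁻¹' {s} ∩ X ⁻¹' {t} = X ⁻¹' {t} := by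
      ext ω
      simp only [Set.mem_inter_iff, Set.mem_preimage, Set.mem_singleton_iff]
      exact ⟨fun hh => hh.2, fun hh => ⟨by rw [hh, hct], hh⟩⟩
    rw [hset]
    rcases eq_or_ne ((μ (X ⁻¹' {t})).toReal) 0 with h0 | h0
    · simp [h0]
    · rw [div_self h0]; simp
  · have hset : (fun ω => c (X ω)) ⁻¹' {s} ∩ X ⁻¹' {t} = ∅ := by
      ext ω
      simp only [Set.mem_inter_iff, Set.mem_preimage, Set.mem_singleton_iff,
        Set.mem_empty_iff_false, iff_false, not_and]
      intro h1 h2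
      exact hct (by rw [← h2, h1])
    rw [hset]
    simp

/-- **The connected component index is the Gács–Körner–Witsenhausen common
information.** Let `X₁, X₂` be finite-ranged random variables on a probability
space `(Ω, μ)` with joint support `S`, and let `C` assign to each outcome the
connected component of the bipartite graph on `𝒳₁ ⊕ 𝒳₂` with edge set `S`
containing `X₁`. Then: (i) `C` is almost surely a function of `X₁` alone and
almost surely a function of `X₂` alone, with `H(C | X₁) = H(C | X₂) = 0`; and
(ii) every finite-valued `Y` with `Y = g₁(X₁)` a.s. and `Y = g₂(X₂)` a.s.
satisfies `H(Y) ≤ H(C)`. Hence `C` achieves the maximum entropy among common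
random variables. -/
theorem connectedComponent_is_GKW_common_information
    {Ω : Type*} [MeasurableSpace Ω] (μ : Measure Ω) [IsProbabilityMeasure μ]
    {𝒳₁ 𝒳₂ : Type*} [Fintype 𝒳₁] [Fintype 𝒳₂]
    (X₁ : Ω → 𝒳₁) (X₂ : Ω → 𝒳₂)
    (hX₁ : ∀ x, MeasurableSet (X₁ ⁻¹' {x}))
    (hX₂ : ∀ x, MeasurableSet (X₂ ⁻¹' {x}))
    (S : Set (𝒳₁ × 𝒳₂))
    (hS : S = {p : 𝒳₁ × 𝒳₂ | μ (X₁ ⁻¹' {p.1} ∩ X₂ ⁻¹' {p.2}) ≠ 0})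
    [Fintype (bipartiteGraph S).ConnectedComponent]
    (C : Ω → (bipartiteGraph S).ConnectedComponent)
    (hC : ∀ ω, C ω = (bipartiteGraph S).connectedComponentMk (Sum.inl (X₁ ω))) :
    ((∃ c₁ : 𝒳₁ → (bipartiteGraph S).ConnectedComponent,
        ∀ᵐ ω ∂μ, C ω = c₁ (X₁ ω)) ∧
      (∃ c₂ : 𝒳₂ → (bipartiteGraph S).ConnectedComponent,
        ∀ᵐ ω ∂μ, C ω = c₂ (X₂ ω)) ∧
      condShannonEntropy μ C X₁ = 0 ∧ condShannonEntropy μ C X₂ = 0) ∧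
    (∀ (𝒦 : Type) [Fintype 𝒦] (Y : Ω → 𝒦) (g₁ : 𝒳₁ → 𝒦) (g₂ : 𝒳₂ → 𝒦),
        (∀ᵐ ω ∂μ, Y ω = g₁ (X₁ ω)) → (∀ᵐ ω ∂μ, Y ω = g₂ (X₂ ω)) →
        shannonEntropy μ Y ≤ shannonEntropy μ C) := by
  classical
  set c₁ : 𝒳₁ → (bipartiteGraph S).ConnectedComponent := fun x => (bipartiteGraph S).connectedComponentMk (Sum.inl x)
  set c₂ : 𝒳₂ → (bipartiteGraph S).ConnectedComponent := fun x => (bipartiteGraph S).connectedComponentMk (Sum.inr x)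
  -- adjacency from membership in S
  have hadjS : ∀ p : 𝒳₁ × 𝒳₂, p ∈ S → (bipartiteGraph S).Adj (Sum.inl p.1) (Sum.inr p.2) := by
    intro p hp
    rw [bipartiteGraph, SimpleGraph.fromRel_adj]
    exact ⟨by simp, Or.inl ⟨p, hp, rfl, rfl⟩⟩
  have hkey : ∀ p : 𝒳₁ × 𝒳₂, p ∈ S → c₁ p.1 = c₂ p.2 := fun p hp =>
    SimpleGraph.ConnectedComponent.connectedComponentMk_eq_of_adj (hadjS p hp)
  -- a.s. the joint value lies in S
  have hNS : μ {ω | (X₁ ω, X₂ ω) ∉ S} = 0 := by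
    have hsub : {ω | (X₁ ω, X₂ ω) ∉ S} ⊆
        ⋃ p ∈ Sᶜ, X₁ ⁻¹' {p.1} ∩ X₂ ⁻¹' {p.2} := by
      intro ω hω
      exact Set.mem_biUnion hω ⟨rfl, rfl⟩
    refine measure_mono_null hsub ?_
    rw [measure_biUnion_null_iff (Set.to_countable _)]
    intro p hp
    by_contra hne
    exact hp (hS ▸ hne)
  have haeS : ∀ᵐ ω ∂μ, (X₁ ω, X₂ ω) ∈ S := by
    rw [MeasureTheory.ae_iff]
    exact hNS
  have hc₂ : ∀ᵐ ω ∂μ, C ω = c₂ (X₂ ω) := by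
    filter_upwards [haeS] with ω hω
    rw [hC ω]
    exact hkey (X₁ ω, X₂ ω) hω
  -- measurability of preimages of C
  have hCmeas : ∀ s, MeasurableSet (C ⁻¹' {s}) := by
    intro s
    have : C ⁻¹' {s} = X₁ ⁻¹' (c₁ ⁻¹' {s}) := by
      ext ω
      simp [Set.mem_preimage, hC ω, c₁]
    rw [this]
    exact measurableSet_preimage_of_fintype hX₁ _
  constructor
  · refine ⟨⟨c₁, Filter.Eventually.of_forall fun ω => hC ω⟩, ⟨c₂, hc₂⟩, ?_, ?_⟩
    · exact condShannonEntropy_eq_zero μ C X₁ c₁ (Filter.Eventually.of_forall fun ω => hC ω)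
    · exact condShannonEntropy_eq_zero μ C X₂ c₂ hc₂
  · intro 𝒦 _ Y g₁ g₂ h1 h2
    -- g₁ and g₂ agree on pairs in S
    have hagree : ∀ p : 𝒳₁ × 𝒳₂, p ∈ S → g₁ p.1 = g₂ p.2 := by
      intro p hp
      have hpos : μ (X₁ ⁻¹' {p.1} ∩ X₂ ⁻¹' {p.2}) ≠ 0 := by rwa [hS] at hp
      have hA : μ {ω | ¬(Y ω = g₁ (X₁ ω) ∧ Y ω = g₂ (X₂ ω))} = 0 := by
        have := (h1.and h2)
        rwa [MeasureTheory.ae_iff] at this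
      have hne : (X₁ ⁻¹' {p.1} ∩ X₂ ⁻¹' {p.2} ∩
          {ω | Y ω = g₁ (X₁ ω) ∧ Y ω = g₂ (X₂ ω)}).Nonempty := by
        by_contra hemp
        rw [Set.not_nonempty_iff_eq_empty] at hemp
        have hsub : X₁ ⁻¹' {p.1} ∩ X₂ ⁻¹' {p.2} ⊆
            {ω | ¬(Y ω = g₁ (X₁ ω) ∧ Y ω = g₂ (X₂ ω))} := by
          intro ω hω
          intro hcon
          exact Set.eq_empty_iff_forall_notMem.1 hemp ω ⟨hω, hcon⟩
        exact hpos (measure_mono_null hsub hA)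
      obtain ⟨ω, ⟨⟨hω1, hω2⟩, hY1, hY2⟩⟩ := hne
      have e1 : X₁ ω = p.1 := hω1
      have e2 : X₂ ω = p.2 := hω2
      rw [← e1, ← e2, ← hY1, ← hY2]
    -- the common function is constant on connected components
    set h : 𝒳₁ ⊕ 𝒳₂ → 𝒦 := Sum.elim g₁ g₂ with hh
    have hadj : ∀ v w, (bipartiteGraph S).Adj v w → h v = h w := by
      intro v w hvw
      rw [bipartiteGraph, SimpleGraph.fromRel_adj] at hvw
      rcases hvw.2 with ⟨p, hp, hv, hw⟩ | ⟨p, hp, hw, hv⟩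
      · rw [hv, hw]; exact hagree p hp
      · rw [hv, hw]; exact (hagree p hp).symm
    have hwalk : ∀ v w, (bipartiteGraph S).Walk v w → h v = h w := by
      intro v w pth
      induction pth with
      | nil => rfl
      | cons a _ ih => exact (hadj _ _ a).trans ih
    set f : (bipartiteGraph S).ConnectedComponent → 𝒦 :=
      SimpleGraph.ConnectedComponent.lift h (fun v w p _ => hwalk v w p) with hf
    have hYC : ∀ᵐ ω ∂μ, Y ω = (f ∘ C) ω := by
      filter_upwards [h1] with ω hω
      rw [hω, Function.comp_apply, hC ω]
      rfl
    calc shannonEntropy μ Y = shannonEntropy μ (f ∘ C) := shannonEntropy_congr_ae hYC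
      _ ≤ shannonEntropy μ C := shannonEntropy_comp_le μ C hCmeas f
end
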